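/- Let W be a CSF satisfying Competitiveness, Co-monotonicity, and p-Continuity. Then for any fixed e₀, the set {W(e₀,p) : p ∈ Δ_k} equals the open interval (0,1). -/

import Mathlib

open MeasureTheory Set Filter Topology

noncomputable section

/-- A family of performance CDFs `{F_e}` as in Definition 2 (RPF):
each `F e` is a continuous strictly increasing CDF, and for each `x`
the map `e ↦ F e x` is continuous, strictly decreasing on `(0,∞)`,
and tends to `0` as `e → ∞`. -/
def IsCDFfam (F : ℝ → ℝ → ℝ) : Prop :=
  (∀ e ∈ Set.Ioi (0:ℝ), Continuous (F e) ∧ StrictMono (F e) ∧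
    Filter.Tendsto (F e) Filter.atBot (nhds 0) ∧
    Filter.Tendsto (F e) Filter.atTop (nhds 1)) ∧
  (∀ x : ℝ, ContinuousOn (fun e => F e x) (Set.Ioi 0) ∧
    StrictAntiOn (fun e => F e x) (Set.Ioi 0) ∧
    Filter.Tendsto (fun e => F e x) Filter.atTop (nhds 0))

/-- `p ∈ Δ_k`: a Borel measure on `E = (0,∞)` (modeled as a measure on `ℝ`
giving no mass to `(-∞,0]`) with total mass in `(k, 1]`. -/
def MemDelta (k : ℝ) (p : MeasureTheory.Measure ℝ) : Prop :=
  p (Set.Iic 0) = 0 ∧ ENNReal.ofReal k < p Set.univ ∧ p Set.univ ≤ 1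

/-- A contest success function with budget `k`. -/
def IsCSF (k : ℝ) (W : ℝ → MeasureTheory.Measure ℝ → ℝ) : Prop :=
  ∀ p : MeasureTheory.Measure ℝ, MemDelta k p →
    (∀ e ∈ Set.Ioi (0:ℝ), W e p ∈ Set.Icc (0:ℝ) 1) ∧
    Measurable (fun e => W e p) ∧ (∫ e, W e p ∂p) = k

/-- Random Performance Function: `W e p = 1 - F e (s p)` where the cutoff
`s p` solves the market-clearing equation. -/
def IsRPF (k : ℝ) (W : ℝ → MeasureTheory.Measure ℝ → ℝ) : Prop :=
  ∃ F : ℝ → ℝ → ℝ, IsCDFfam F ∧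
    ∀ p : MeasureTheory.Measure ℝ, MemDelta k p → ∃ s : ℝ,
      (∫ e, (1 - F e s) ∂p) = k ∧ ∀ e ∈ Set.Ioi (0:ℝ), W e p = 1 - F e s

/-- Co-monotonicity. -/
def CoMonotone (k : ℝ) (W : ℝ → MeasureTheory.Measure ℝ → ℝ) : Prop :=
  ∀ e ∈ Set.Ioi (0:ℝ), ∀ e' ∈ Set.Ioi (0:ℝ), ∀ p p' : MeasureTheory.Measure ℝ,
    MemDelta k p → MemDelta k p' → W e p' ≤ W e p → W e' p' ≤ W e' p

/-- Monotonicity. -/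
def CSFMonotone (k : ℝ) (W : ℝ → MeasureTheory.Measure ℝ → ℝ) : Prop :=
  ∀ p : MeasureTheory.Measure ℝ, MemDelta k p →
    StrictMonoOn (fun e => W e p) (Set.Ioi 0) ∧
    Filter.Tendsto (fun e => W e p) Filter.atTop (nhds 1)

/-- Competitiveness. -/
def CSFCompetitive (k : ℝ) (W : ℝ → MeasureTheory.Measure ℝ → ℝ) : Prop :=
  ∀ e ∈ Set.Ioi (0:ℝ),
    Filter.Tendsto (fun eb => W e (MeasureTheory.Measure.dirac eb)) Filter.atTop (nhds 0)

/-- The mixture `α p + (1-α) p'`. -/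
def mix (α : ℝ) (p p' : MeasureTheory.Measure ℝ) : MeasureTheory.Measure ℝ :=
  ENNReal.ofReal α • p + ENNReal.ofReal (1 - α) • p'

/-- p-Continuity. -/
def PContinuousCSF (k : ℝ) (W : ℝ → MeasureTheory.Measure ℝ → ℝ) : Prop :=
  ∀ e ∈ Set.Ioi (0:ℝ), ∀ p p' : MeasureTheory.Measure ℝ,
    MemDelta k p → MemDelta k p' →
    ContinuousOn (fun α => W e (mix α p p')) (Set.Icc 0 1)

/-- e-Continuity. -/
def EContinuous (k : ℝ) (W : ℝ → MeasureTheory.Measure ℝ → ℝ) : Prop :=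
  ∀ p : MeasureTheory.Measure ℝ, MemDelta k p →
    ContinuousOn (fun e => W e p) (Set.Ioi 0)

/-- The right-shift `p ∔ a`. -/
def shift (p : MeasureTheory.Measure ℝ) (a : ℝ) : MeasureTheory.Measure ℝ :=
  MeasureTheory.Measure.map (fun x => x + a) p

/-- A single continuous strictly increasing CDF on `ℝ`. -/
def IsCDF (F : ℝ → ℝ) : Prop :=
  Continuous F ∧ StrictMono F ∧
  Filter.Tendsto F Filter.atBot (nhds 0) ∧ Filter.Tendsto F Filter.atTop (nhds 1)

/-- `F` represents `W` as an additive RPF: `W e p = 1 - F (s p - e)`. -/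
def RepresentsA (k : ℝ) (W : ℝ → MeasureTheory.Measure ℝ → ℝ) (F : ℝ → ℝ) : Prop :=
  ∀ p : MeasureTheory.Measure ℝ, MemDelta k p → ∃ s : ℝ,
    (∫ e, (1 - F (s - e)) ∂p) = k ∧ ∀ e ∈ Set.Ioi (0:ℝ), W e p = 1 - F (s - e)

/-- Additive RPF. -/
def IsARPF (k : ℝ) (W : ℝ → MeasureTheory.Measure ℝ → ℝ) : Prop :=
  ∃ F : ℝ → ℝ, IsCDF F ∧ RepresentsA k W F

/-- Invariance to Common Shifts. -/
def InvCommonShifts (k : ℝ) (W : ℝ → MeasureTheory.Measure ℝ → ℝ) : Prop :=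
  ∀ e ∈ Set.Ioi (0:ℝ), ∀ a ∈ Set.Ioi (0:ℝ), ∀ p : MeasureTheory.Measure ℝ,
    MemDelta k p → W e p = W (e + a) (shift p a)

/-- Invariance to p Shifts. -/
def InvPShifts (k : ℝ) (W : ℝ → MeasureTheory.Measure ℝ → ℝ) : Prop :=
  ∀ e ∈ Set.Ioi (0:ℝ), ∀ e' ∈ Set.Ioi (0:ℝ), ∀ a ∈ Set.Ioi (0:ℝ),
    ∀ p p' : MeasureTheory.Measure ℝ, MemDelta k p → MemDelta k p' →
    W e p = W e' p' → W e (shift p a) = W e' (shift p' a)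

/-! If `W(e₀,p) = 0`, co-monotonicity transports `W(e₀,p) ≤ W(e₀,δ_ē)` to every
other effort `e`, and competitiveness forces `W(e,p) = 0`; if `W(e₀,p) = 1`, comparing with the
scaled point masses `α δ_e`, for which `W(e,α δ_e) = k/α`, forces `W(e,p) = 1`. Either way the
budget identity `∫ W(·,p) dp = k` fails, since `k > 0` and `p` has mass `> k`. Conversely, the
values in `[k,1)` are the `k/α`, and those in `(0,k)` are reached by the intermediate value
theorem along the mixtures of `δ_ē` and `δ_{e₀}`, with `W(e₀,δ_ē) < x` for large `ē` and
`W(e₀,δ_{e₀}) = k`. -/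

namespace MemDelta

variable {k : ℝ} {p p' : Measure ℝ}

lemma ae_pos (hp : MemDelta k p) : ∀ᵐ e ∂p, 0 < e := by
  filter_upwards [measure_eq_zero_iff_ae_notMem.1 hp.1] with e he
  simpa using he

lemma lt_measureReal_univ (hk : 0 ≤ k) (hp : MemDelta k p) : k < p.real univ := by
  have hfin : p univ ≠ ⊤ := ne_top_of_le_ne_top ENNReal.one_ne_top hp.2.2
  simpa [measureReal_def, ENNReal.toReal_ofReal hk] using
    (ENNReal.toReal_lt_toReal ENNReal.ofReal_ne_top hfin).2 hp.2.1

lemma smul_dirac {α e : ℝ} (hk : 0 ≤ k) (hα : α ∈ Ioc k 1) (he : 0 < e) :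
    MemDelta k (ENNReal.ofReal α • Measure.dirac e) := by
  have hα0 : 0 < α := hk.trans_lt hα.1
  refine ⟨?_, ?_, ?_⟩
  · simp [Measure.dirac_apply' _ measurableSet_Iic, not_le.2 he]
  · simpa using (ENNReal.ofReal_lt_ofReal_iff hα0).2 hα.1
  · simpa using ENNReal.ofReal_le_one.2 hα.2

lemma dirac {e : ℝ} (hk : k ∈ Ioo 0 1) (he : 0 < e) : MemDelta k (Measure.dirac e) := by
  simpa using smul_dirac hk.1.le ⟨hk.2, le_rfl⟩ he

lemma mix {α : ℝ} (hα : α ∈ Icc 0 1) (hp : MemDelta k p) (hp' : MemDelta k p') :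
    MemDelta k (mix α p p') := by
  have hweights : ENNReal.ofReal α + ENNReal.ofReal (1 - α) = 1 := by
    rw [← ENNReal.ofReal_add hα.1 (by linarith [hα.2])]
    simp
  refine ⟨by simp [_root_.mix, hp.1, hp'.1], ?_, ?_⟩
  · calc ENNReal.ofReal k < min (p univ) (p' univ) := lt_min_iff.2 ⟨hp.2.1, hp'.2.1⟩
      _ = (ENNReal.ofReal α + ENNReal.ofReal (1 - α)) * min (p univ) (p' univ) := by
          rw [hweights, one_mul]
      _ ≤ _ := by
          rw [_root_.mix, add_mul, Measure.add_apply, Measure.smul_apply, Measure.smul_apply,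
            smul_eq_mul, smul_eq_mul]
          gcongr
          exacts [min_le_left _ _, min_le_right _ _]
  · calc (_root_.mix α p p') univ ≤ ENNReal.ofReal α * 1 + ENNReal.ofReal (1 - α) * 1 := by
          rw [_root_.mix, Measure.add_apply, Measure.smul_apply, Measure.smul_apply, smul_eq_mul,
            smul_eq_mul]
          gcongr
          exacts [hp.2.2, hp'.2.2]
      _ = 1 := by rw [mul_one, mul_one, hweights]

end MemDelta

lemma mix_zero (p p' : Measure ℝ) : mix 0 p p' = p' := by
  simp [mix]

lemma mix_one (p p' : Measure ℝ) : mix 1 p p' = p := by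
  simp [mix]

namespace IsCSF

variable {k : ℝ} {W : ℝ → Measure ℝ → ℝ}

lemma apply_smul_dirac_self (hW : IsCSF k W) {α e : ℝ} (hα : 0 < α)
    (hmem : MemDelta k (ENNReal.ofReal α • Measure.dirac e)) :
    W e (ENNReal.ofReal α • Measure.dirac e) = k / α := by
  have hint := (hW _ hmem).2.2
  rw [integral_smul_measure, integral_dirac, ENNReal.toReal_ofReal hα.le, smul_eq_mul] at hint
  rw [eq_div_iff hα.ne', ← hint, mul_comm]

lemma apply_dirac_self (hW : IsCSF k W) {e : ℝ} (hmem : MemDelta k (Measure.dirac e)) :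
    W e (Measure.dirac e) = k := by
  simpa using (hW _ hmem).2.2

variable {e₀ : ℝ} {p : Measure ℝ}

lemma apply_le_zero_of_apply_eq_zero (hW : IsCSF k W) (hk : k ∈ Ioo 0 1)
    (hcomp : CSFCompetitive k W) (hco : CoMonotone k W) (he₀ : 0 < e₀) (hp : MemDelta k p)
    (h0 : W e₀ p = 0) {e : ℝ} (he : 0 < e) : W e p ≤ 0 := by
  refine ge_of_tendsto (hcomp e he) ?_
  filter_upwards [eventually_gt_atTop 0] with eb heb
  have hmem := MemDelta.dirac hk heb
  refine hco e₀ he₀ e he _ p hmem hp ?_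
  rw [h0]
  exact ((hW _ hmem).1 e₀ he₀).1

lemma one_le_apply_of_apply_eq_one (hW : IsCSF k W) (hk : k ∈ Ioo 0 1)
    (hco : CoMonotone k W) (he₀ : 0 < e₀) (hp : MemDelta k p)
    (h1 : W e₀ p = 1) {e : ℝ} (he : 0 < e) : 1 ≤ W e p := by
  have hbound : ∀ α ∈ Ioc k 1, k / α ≤ W e p := by
    intro α hα
    have hmem := MemDelta.smul_dirac hk.1.le hα he
    rw [← hW.apply_smul_dirac_self (hk.1.trans hα.1) hmem]
    refine hco e₀ he₀ e he p _ hp hmem ?_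
    rw [h1]
    exact ((hW _ hmem).1 e₀ he₀).2
  have hlim : Tendsto (fun α => k / α) (𝓝[>] k) (𝓝 1) := by
    have hcont : ContinuousAt (fun α : ℝ => k / α) k :=
      continuousAt_const.div continuousAt_id hk.1.ne'
    simpa [div_self hk.1.ne'] using tendsto_nhdsWithin_of_tendsto_nhds hcont.tendsto
  refine le_of_tendsto hlim ?_
  filter_upwards [Ioc_mem_nhdsGT hk.2] with α hα
  exact hbound α hα

lemma apply_mem_Ioo (hW : IsCSF k W) (hk : k ∈ Ioo 0 1) (hcomp : CSFCompetitive k W)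
    (hco : CoMonotone k W) (he₀ : 0 < e₀) (hp : MemDelta k p) : W e₀ p ∈ Ioo 0 1 := by
  obtain ⟨hbound, -, hbudget⟩ := hW p hp
  constructor
  · refine (hbound e₀ he₀).1.lt_of_ne fun h0 => hk.1.ne' ?_
    rw [← hbudget]
    refine integral_eq_zero_of_ae ?_
    filter_upwards [hp.ae_pos] with e he
    exact le_antisymm
      (hW.apply_le_zero_of_apply_eq_zero hk hcomp hco he₀ hp h0.symm he) (hbound e he).1
  · refine (hbound e₀ he₀).2.lt_of_ne fun h1 => (hp.lt_measureReal_univ hk.1.le).ne ?_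
    rw [← hbudget]
    calc ∫ e, W e p ∂p = ∫ _, (1 : ℝ) ∂p := by
          refine integral_congr_ae ?_
          filter_upwards [hp.ae_pos] with e he
          exact le_antisymm (hbound e he).2
            (hW.one_le_apply_of_apply_eq_one hk hco he₀ hp h1 he)
      _ = p.real univ := by simp

lemma exists_apply_eq_of_le (hW : IsCSF k W) (hk : k ∈ Ioo 0 1) (he₀ : 0 < e₀) {x : ℝ}
    (hkx : k ≤ x) (hx1 : x < 1) : ∃ p, MemDelta k p ∧ W e₀ p = x := by
  have hx0 : 0 < x := hk.1.trans_le hkx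
  have hα : k / x ∈ Ioc k 1 :=
    ⟨(lt_div_iff₀ hx0).2 (mul_lt_of_lt_one_right hk.1 hx1), (div_le_one hx0).2 hkx⟩
  have hmem := MemDelta.smul_dirac hk.1.le hα he₀
  refine ⟨_, hmem, ?_⟩
  rw [hW.apply_smul_dirac_self (hk.1.trans hα.1) hmem, div_div_cancel₀ hk.1.ne']

lemma exists_apply_eq_of_lt (hW : IsCSF k W) (hk : k ∈ Ioo 0 1) (hcomp : CSFCompetitive k W)
    (hpc : PContinuousCSF k W) (he₀ : 0 < e₀) {x : ℝ} (hx0 : 0 < x) (hxk : x < k) :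
    ∃ p, MemDelta k p ∧ W e₀ p = x := by
  obtain ⟨eb, hlt, heb⟩ :=
    (((hcomp e₀ he₀).eventually (gt_mem_nhds hx0)).and (eventually_gt_atTop 0)).exists
  have hmemb := MemDelta.dirac hk heb
  have hmem₀ := MemDelta.dirac hk he₀
  have hx : x ∈ Icc (W e₀ (mix 1 (Measure.dirac eb) (Measure.dirac e₀)))
      (W e₀ (mix 0 (Measure.dirac eb) (Measure.dirac e₀))) := by
    rw [mix_one, mix_zero, hW.apply_dirac_self hmem₀]
    exact ⟨hlt.le, hxk.le⟩
  obtain ⟨α, hα, hαx⟩ :=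
    intermediate_value_Icc' zero_le_one (hpc e₀ he₀ _ _ hmemb hmem₀) hx
  exact ⟨_, hmemb.mix hα hmem₀, hαx⟩

end IsCSF

/-- for a CSF satisfying Competitiveness, Co-monotonicity and
p-Continuity, the range of `p ↦ W(e₀,p)` over `Δ_k` is exactly `(0,1)`. -/
theorem range_eq_Ioo (k : ℝ) (hk : k ∈ Set.Ioo (0:ℝ) 1)
    (W : ℝ → MeasureTheory.Measure ℝ → ℝ) (hW : IsCSF k W)
    (hcomp : CSFCompetitive k W) (hco : CoMonotone k W) (hpc : PContinuousCSF k W)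
    (e₀ : ℝ) (he₀ : e₀ ∈ Set.Ioi (0:ℝ)) :
    {x : ℝ | ∃ p : MeasureTheory.Measure ℝ, MemDelta k p ∧ W e₀ p = x} =
      Set.Ioo (0:ℝ) 1 := by
  ext x
  constructor
  · rintro ⟨p, hp, rfl⟩
    exact hW.apply_mem_Ioo hk hcomp hco he₀ hp
  · rintro ⟨hx0, hx1⟩
    rcases lt_or_ge x k with hxk | hkx
    · exact hW.exists_apply_eq_of_lt hk hcomp hpc he₀ hx0 hxk
    · exact hW.exists_apply_eq_of_le hk he₀ hkx hx1
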